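/- arXiv:1703.08937 — 2 statements merged into one kernel-verified Lean document; each statement's English description precedes it below -/
import Mathlib

section
/- For a random variable X with mean μ, variance σ² > 0, and kurtosis κ = E[(X-μ)⁴]/σ⁴ < ∞, the skewness γ = E[(X-μ)³]/σ³ satisfies γ ≤ √(κ - 1). -/
/-!
Pearson's inequality. For the centred variable `Y = X - μ` we have `E[Y³] = E[Y (Y² - σ²)]`
because `E[Y] = 0`, so Cauchy–Schwarz gives `E[Y³]² ≤ σ² E[(Y² - σ²)²] = σ² (E[Y⁴] - σ⁴)`.
Dividing by `σ⁶` yields `γ² ≤ κ - 1`.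
-/

open MeasureTheory

namespace MeasureTheory

variable {α : Type*} [MeasurableSpace α] {μ : Measure α}

theorem sq_integral_mul_le_integral_sq_mul_integral_sq {f g : α → ℝ}
    (hf : MemLp f 2 μ) (hg : MemLp g 2 μ) :
    (∫ x, f x * g x ∂μ) ^ 2 ≤ (∫ x, f x ^ 2 ∂μ) * ∫ x, g x ^ 2 ∂μ := by
  have hquad : ∀ t : ℝ, 0 ≤ (∫ x, f x ^ 2 ∂μ) * (t * t) + (-2 * ∫ x, f x * g x ∂μ) * t
      + ∫ x, g x ^ 2 ∂μ := by
    intro t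
    have hf2 : Integrable (fun x => (t * t) * f x ^ 2) μ := hf.integrable_sq.const_mul _
    have hfg : Integrable (fun x => (-2 * t) * (f x * g x)) μ :=
      (hf.integrable_mul hg).const_mul _
    calc 0 ≤ ∫ x, (t * f x - g x) ^ 2 ∂μ := integral_nonneg fun x => sq_nonneg _
      _ = ∫ x, ((t * t) * f x ^ 2 + (-2 * t) * (f x * g x) + g x ^ 2) ∂μ := by
        congr 1; funext x; ring
      _ = _ := by
        rw [integral_add (hf2.fun_add hfg) hg.integrable_sq, integral_add hf2 hfg,
          integral_const_mul, integral_const_mul]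
        ring
  have hdiscrim := discrim_le_zero hquad
  rw [discrim] at hdiscrim
  linarith

theorem MemLp.memLp_two_sq {Y : α → ℝ} (hY : MemLp Y 4 μ) : MemLp (fun x => Y x ^ 2) 2 μ := by
  refine (memLp_two_iff_integrable_sq (hY.1.pow 2)).2 ?_
  have h4 : Integrable (fun x => ‖Y x‖ ^ 4) μ := hY.integrable_norm_pow (p := 4) (by norm_num)
  refine h4.congr (ae_of_all _ fun x => ?_)
  simp only [Real.norm_eq_abs, Pi.pow_apply, ← pow_mul]
  exact (by norm_num : Even 4).pow_abs _

theorem sq_integral_pow_three_le_of_integral_eq_zero [IsProbabilityMeasure μ] {Y : α → ℝ}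
    (hY : MemLp Y 4 μ) (hY0 : ∫ x, Y x ∂μ = 0) :
    (∫ x, Y x ^ 3 ∂μ) ^ 2 ≤ (∫ x, Y x ^ 2 ∂μ) * (∫ x, Y x ^ 4 ∂μ - (∫ x, Y x ^ 2 ∂μ) ^ 2) := by
  set s := ∫ x, Y x ^ 2 ∂μ
  have hY2 : MemLp Y 2 μ := hY.mono_exponent (by norm_num)
  have hsq : MemLp (fun x => Y x ^ 2) 2 μ := hY.memLp_two_sq
  have hY3 : Integrable (fun x => Y x ^ 3) μ := by
    convert hY2.integrable_mul hsq using 1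
    funext x
    simp only [Pi.mul_apply, ← pow_succ']
  have hY4 : Integrable (fun x => Y x ^ 4) μ := by
    simpa only [← pow_mul] using hsq.integrable_sq
  have hcov : ∫ x, Y x * (Y x ^ 2 - s) ∂μ = ∫ x, Y x ^ 3 ∂μ := by
    calc ∫ x, Y x * (Y x ^ 2 - s) ∂μ = ∫ x, (Y x ^ 3 - s * Y x) ∂μ := by
          congr 1; funext x; ring
      _ = _ := by
        rw [integral_sub hY3 ((hY2.integrable one_le_two).const_mul s), integral_const_mul, hY0]
        ring
  have hvar : ∫ x, (Y x ^ 2 - s) ^ 2 ∂μ = ∫ x, Y x ^ 4 ∂μ - s ^ 2 := by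
    calc ∫ x, (Y x ^ 2 - s) ^ 2 ∂μ = ∫ x, (Y x ^ 4 - 2 * s * Y x ^ 2 + s ^ 2) ∂μ := by
          congr 1; funext x; ring
      _ = _ := by
        rw [integral_add (hY4.sub' (hY2.integrable_sq.const_mul _)) (integrable_const _),
          integral_sub hY4 (hY2.integrable_sq.const_mul _), integral_const_mul, integral_const]
        simp only [probReal_univ, one_smul]
        ring
  have hsq_sub : MemLp (fun x => Y x ^ 2 - s) 2 μ := hsq.sub (memLp_const s)
  have hcs := sq_integral_mul_le_integral_sq_mul_integral_sq hY2 hsq_sub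
  rwa [hcov, hvar] at hcs

end MeasureTheory

theorem div_sqrt_pow_three_le_sqrt_div_sq_sub_one {a s q : ℝ} (hs : 0 < s)
    (h : a ^ 2 ≤ s * (q - s ^ 2)) : a / √s ^ 3 ≤ √(q / s ^ 2 - 1) := by
  refine (le_abs_self _).trans (Real.abs_le_sqrt ?_)
  rw [div_pow, ← pow_mul, show 3 * 2 = 2 * 3 by rfl, pow_mul, Real.sq_sqrt hs.le,
    div_sub_one (by positivity), div_le_div_iff₀ (by positivity) (by positivity)]
  nlinarith [mul_le_mul_of_nonneg_right h (sq_nonneg s)]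

/-- Skewness is bounded by `√(κ - 1)` where `κ` is the kurtosis. -/
theorem skewness_le_sqrt_kurtosis_sub_one
    {Ω : Type*} [MeasurableSpace Ω] (P : Measure Ω) [IsProbabilityMeasure P]
    (X : Ω → ℝ) (hX : MemLp X 4 P)
    (m σ2 γ κ : ℝ)
    (hm : m = ∫ ω, X ω ∂P)
    (hσ2 : σ2 = ∫ ω, (X ω - m) ^ 2 ∂P)
    (hσ2pos : 0 < σ2)
    (hγ : γ = (∫ ω, (X ω - m) ^ 3 ∂P) / Real.sqrt σ2 ^ 3)
    (hκ : κ = (∫ ω, (X ω - m) ^ 4 ∂P) / σ2 ^ 2) :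
    γ ≤ Real.sqrt (κ - 1) := by
  have hcentered : ∫ ω, (X ω - m) ∂P = 0 := by
    rw [integral_sub (hX.integrable (by norm_num)) (integrable_const m)]
    simp [hm]
  have hY : MemLp (fun ω => X ω - m) 4 P := hX.sub (memLp_const m)
  have hpearson := sq_integral_pow_three_le_of_integral_eq_zero hY hcentered
  rw [← hσ2] at hpearson
  rw [hγ, hκ]
  exact div_sqrt_pow_three_le_sqrt_div_sq_sub_one hσ2pos hpearson
end

section
/- If Z = X + Y where X, Y are independent, Var[X] = 1, Kurt[X] = κ ≤ κ₀ with κ₀ ≥ 7/2, and Y = (Δ/p)B with B ~ Bernoulli(p) and p = min{Δ, 1/κ₀}, then Kurt[Z] ≤ κ₀. -/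
/-!
Centre `Z` as `X + W` with `W = c (B - p)`, `c = Δ / p`. For independent centred summands
`E (X + W)⁴ = E X⁴ + 6 E X² E W² + E W⁴`, and with `q = p (1 - p)` the Bernoulli law gives
`E W² = c² q`, `E W⁴ = c⁴ q (1 - 3 q)`. Writing `s = c² q`,
`κ₀ (1 + s)² - (κ + 6 s + c⁴ q (1 - 3 q)) = (κ₀ - κ) + (2 κ₀ - 7) s + s (1 - c² (1 - (3 + κ₀) q))`,
and `p = min Δ (1 / κ₀)` makes the last bracket nonnegative: either `c = 1`, or `p = 1 / κ₀` and
then `(3 + κ₀) q ≥ 1`.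
-/

open MeasureTheory ProbabilityTheory Finset unitInterval

lemma MeasureTheory.MemLp.integrable_pow_of_le {Ω : Type*} [MeasurableSpace Ω] {P : Measure Ω}
    [IsFiniteMeasure P] {X : Ω → ℝ} {n m : ℕ} (hX : MemLp X n P) (hm : m ≤ n) :
    Integrable (fun ω => X ω ^ m) P := by
  rcases Nat.eq_zero_or_pos m with rfl | hm0
  · simp
  refine ((hX.mono_exponent (by exact_mod_cast hm)).integrable_norm_pow hm0.ne').mono'
    (hX.aestronglyMeasurable.pow m) (ae_of_all _ fun ω => ?_)
  simp [norm_pow]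

lemma ProbabilityTheory.IndepFun.integral_add_pow {Ω : Type*} [MeasurableSpace Ω]
    {P : Measure Ω} [IsFiniteMeasure P] {X W : Ω → ℝ} {n : ℕ} (hXW : IndepFun X W P)
    (hX : MemLp X n P) (hW : MemLp W n P) :
    ∫ ω, (X ω + W ω) ^ n ∂P
      = ∑ m ∈ range (n + 1),
          (∫ ω, X ω ^ m ∂P) * (∫ ω, W ω ^ (n - m) ∂P) * n.choose m := by
  have hpow (m k : ℕ) : IndepFun (fun ω => X ω ^ m) (fun ω => W ω ^ k) P :=
    hXW.comp (measurable_id.pow_const m) (measurable_id.pow_const k)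
  simp_rw [add_pow]
  rw [integral_finsetSum]
  · refine sum_congr rfl fun m _ => ?_
    rw [integral_mul_const, (hpow m (n - m)).integral_fun_mul_eq_mul_integral
      (hX.aestronglyMeasurable.pow m) (hW.aestronglyMeasurable.pow (n - m))]
  · intro m hm
    exact ((hpow m (n - m)).integrable_mul (hX.integrable_pow_of_le (by simp at hm; omega))
      (hW.integrable_pow_of_le (Nat.sub_le n m))).mul_const _

section Centered

variable {Ω : Type*} [MeasurableSpace Ω] {P : Measure Ω} [IsProbabilityMeasure P]
  {X W : Ω → ℝ}

lemma ProbabilityTheory.IndepFun.integral_add_sq_of_integral_eq_zero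
    (hXW : IndepFun X W P) (hX : MemLp X 2 P) (hW : MemLp W 2 P) (hX0 : ∫ ω, X ω ∂P = 0)
    (hW0 : ∫ ω, W ω ∂P = 0) :
    ∫ ω, (X ω + W ω) ^ 2 ∂P = ∫ ω, X ω ^ 2 ∂P + ∫ ω, W ω ^ 2 ∂P := by
  rw [hXW.integral_add_pow (n := 2) hX hW]
  simp [sum_range_succ, hX0, hW0, add_comm]

lemma ProbabilityTheory.IndepFun.integral_add_pow_four_of_integral_eq_zero
    (hXW : IndepFun X W P) (hX : MemLp X 4 P) (hW : MemLp W 4 P) (hX0 : ∫ ω, X ω ∂P = 0)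
    (hW0 : ∫ ω, W ω ∂P = 0) :
    ∫ ω, (X ω + W ω) ^ 4 ∂P
      = ∫ ω, X ω ^ 4 ∂P + 6 * (∫ ω, X ω ^ 2 ∂P) * (∫ ω, W ω ^ 2 ∂P) + ∫ ω, W ω ^ 4 ∂P := by
  rw [hXW.integral_add_pow (n := 4) hX hW]
  simp only [Nat.reduceAdd, sum_range_succ, range_one, sum_singleton, pow_zero,
    integral_const, probReal_univ, smul_eq_mul, mul_one, tsub_zero, one_mul, Nat.choose,
    Nat.cast_one, pow_one, hX0, Nat.add_one_sub_one, zero_mul, add_zero, Nat.cast_ofNat,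
    Nat.reduceSub, hW0, mul_zero, tsub_self]
  ring

end Centered

lemma ofReal_smul_dirac_add_ofReal_smul_dirac_eq_bernoulliMeasure {α : Type*}
    [MeasurableSpace α] (x y : α) {p : ℝ} (hp0 : 0 ≤ p) (hp1 : p ≤ 1) :
    ENNReal.ofReal p • Measure.dirac x + ENNReal.ofReal (1 - p) • Measure.dirac y
      = Ber(x, y, ⟨p, hp0, hp1⟩) := by
  rw [bernoulliMeasure_def, ENNReal.smul_def, ENNReal.smul_def]
  congr 3 <;> exact ENNReal.ofReal_eq_coe_nnreal _

lemma ProbabilityTheory.ae_eq_or_eq_bernoulliMeasure {α : Type*} [MeasurableSpace α]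
    [MeasurableSingletonClass α] (x y : α) (p : I) : ∀ᵐ z ∂Ber(x, y, p), z = x ∨ z = y := by
  rw [bernoulliMeasure_def, ae_add_measure_iff]
  exact ⟨Measure.ae_smul_measure (by simp [ae_dirac_eq]) _,
    Measure.ae_smul_measure (by simp [ae_dirac_eq]) _⟩

section Bernoulli

variable {Ω : Type*} [MeasurableSpace Ω] {P : Measure Ω} {B : Ω → ℝ} {x y : ℝ} {p : I}

lemma memLp_top_of_map_eq_bernoulliMeasure (hB : AEMeasurable B P)
    (hlaw : P.map B = Ber(x, y, p)) : MemLp B ⊤ P := by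
  refine memLp_top_of_bound hB.aestronglyMeasurable (max |x| |y|) ?_
  filter_upwards [ae_of_ae_map hB (hlaw ▸ ae_eq_or_eq_bernoulliMeasure x y p)] with ω hω
  rcases hω with h | h <;> simp [h]

lemma integral_comp_of_map_eq_bernoulliMeasure (hB : AEMeasurable B P)
    (hlaw : P.map B = Ber(x, y, p)) (g : ℝ → ℝ) :
    ∫ ω, g (B ω) ∂P = p * g x + (1 - p) * g y := by
  rw [← integral_map hB, hlaw, integral_bernoulliMeasure, smul_eq_mul, smul_eq_mul]
  exact hlaw ▸ (integrable_bernoulliMeasure x y p g).aestronglyMeasurable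

end Bernoulli

lemma fourth_moment_ratio_le {κ κ₀ c q : ℝ} (hκ : κ ≤ κ₀) (hκ₀ : 7 / 2 ≤ κ₀) (hq : 0 ≤ q)
    (hc : c ^ 2 * (1 - (3 + κ₀) * q) ≤ 1) :
    (κ + 6 * (c ^ 2 * q) + c ^ 4 * q * (1 - 3 * q)) / (1 + c ^ 2 * q) ^ 2 ≤ κ₀ := by
  have hs : 0 ≤ c ^ 2 * q := by positivity
  rw [div_le_iff₀ (by positivity)]
  nlinarith [mul_nonneg hs (sub_nonneg.2 hc),
    mul_nonneg hs (by linarith : (0 : ℝ) ≤ 2 * κ₀ - 7)]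

lemma sq_div_min_mul_le_one {κ₀ Δ p : ℝ} (hκ₀ : 3 / 2 ≤ κ₀) (hΔ : 0 < Δ)
    (hp : p = min Δ (1 / κ₀)) : (Δ / p) ^ 2 * (1 - (3 + κ₀) * (p * (1 - p))) ≤ 1 := by
  have hκ₀pos : 0 < κ₀ := by linarith
  rcases le_total Δ (1 / κ₀) with h | h
  · rw [min_eq_left h] at hp
    subst hp
    have hp1 : p ≤ 1 := h.trans ((div_le_one hκ₀pos).2 (by linarith))
    rw [div_self hΔ.ne']
    nlinarith [mul_nonneg (mul_nonneg hΔ.le (sub_nonneg.2 hp1))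
      (by linarith : (0 : ℝ) ≤ 3 + κ₀)]
  · rw [min_eq_right h] at hp
    subst hp
    have hq : 1 ≤ (3 + κ₀) * (1 / κ₀ * (1 - 1 / κ₀)) := by
      field_simp
      nlinarith
    nlinarith [sq_nonneg (Δ / (1 / κ₀))]

/-- The Bernoulli perturbation keeps the kurtosis below `κ₀` when `κ₀ ≥ 7/2`
and `p = min{Δ, 1/κ₀}`. -/
theorem kurtosis_bernoulli_perturbation_le
    {Ω : Type*} [MeasurableSpace Ω] (P : Measure Ω) [IsProbabilityMeasure P]
    (X B : Ω → ℝ) (hX : MemLp X 4 P) (hB : Measurable B)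
    (hindep : ProbabilityTheory.IndepFun X B P)
    (κ κ₀ Δ p : ℝ) (hκ₀ : 7 / 2 ≤ κ₀) (hΔ : 0 < Δ)
    (hp : p = min Δ (1 / κ₀))
    (hBlaw : Measure.map B P
      = ENNReal.ofReal p • Measure.dirac (1 : ℝ)
        + ENNReal.ofReal (1 - p) • Measure.dirac (0 : ℝ))
    (hmean : ∫ ω, X ω ∂P = 0) (hvar : ∫ ω, (X ω) ^ 2 ∂P = 1)
    (hkurt : ∫ ω, (X ω) ^ 4 ∂P = κ) (hκκ₀ : κ ≤ κ₀)
    (Z : Ω → ℝ) (hZ : Z = fun ω => X ω + (Δ / p) * B ω) :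
    (∫ ω, (Z ω - ∫ ω', Z ω' ∂P) ^ 4 ∂P) /
        (∫ ω, (Z ω - ∫ ω', Z ω' ∂P) ^ 2 ∂P) ^ 2 ≤ κ₀ := by
  have hp0 : 0 < p := hp ▸ lt_min hΔ (by positivity)
  have hp1 : p ≤ 1 :=
    hp ▸ (min_le_right _ _).trans ((div_le_one (by positivity)).2 (by linarith))
  rw [ofReal_smul_dirac_add_ofReal_smul_dirac_eq_bernoulliMeasure 1 0 hp0.le hp1] at hBlaw
  have hBLp := memLp_top_of_map_eq_bernoulliMeasure hB.aemeasurable hBlaw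
  have hEB : ∫ ω, B ω ∂P = p := by
    rw [integral_comp_of_map_eq_bernoulliMeasure hB.aemeasurable hBlaw fun b => b]
    ring
  set c := Δ / p
  set W : Ω → ℝ := fun ω => c * (B ω - p)
  have hcenter (ω : Ω) : Z ω - ∫ ω', Z ω' ∂P = X ω + W ω := by
    rw [hZ, integral_add (hX.integrable (by norm_num)) ((hBLp.integrable le_top).const_mul c),
      integral_const_mul, hmean, hEB]
    ring
  have hmomentW (k : ℕ) :
      ∫ ω, W ω ^ k ∂P = p * (c * (1 - p)) ^ k + (1 - p) * (c * (0 - p)) ^ k :=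
    integral_comp_of_map_eq_bernoulliMeasure hB.aemeasurable hBlaw fun b => (c * (b - p)) ^ k
  have hW0 : ∫ ω, W ω ∂P = 0 := by
    rw [integral_comp_of_map_eq_bernoulliMeasure hB.aemeasurable hBlaw fun b => c * (b - p)]
    ring
  have hWLp : MemLp W 4 P :=
    ((hBLp.sub (memLp_const p)).const_mul c).mono_exponent le_top
  have hindepW : IndepFun X W P :=
    hindep.comp (φ := id) (ψ := fun b => c * (b - p)) measurable_id (by fun_prop)
  simp_rw [hcenter]
  rw [hindepW.integral_add_pow_four_of_integral_eq_zero hX hWLp hmean hW0,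
    hindepW.integral_add_sq_of_integral_eq_zero (hX.mono_exponent (by norm_num))
      (hWLp.mono_exponent (by norm_num)) hmean hW0, hmomentW, hmomentW, hvar, hkurt]
  calc _ = (κ + 6 * (c ^ 2 * (p * (1 - p)))
          + c ^ 4 * (p * (1 - p)) * (1 - 3 * (p * (1 - p)))) / (1 + c ^ 2 * (p * (1 - p))) ^ 2 := by
        ring
    _ ≤ κ₀ := fourth_moment_ratio_le hκκ₀ hκ₀ (by nlinarith)
        (sq_div_min_mul_le_one (by linarith) hΔ hp)
end
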